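/- arXiv:2507.20386 — 2 statements merged into one kernel-verified Lean document; each statement's English description precedes it below -/
import Mathlib

section
/- Fix μ > 0, y^a ∈ ℝ^{m_a}, y^b ∈ ℝ^{m_b}, V ∈ ℝ^{k×n} and an index i ∈ {1,…,n}. For u ∈ ℝ^k let V(u) denote the matrix obtained from V by replacing its i-th column with u. Then the function u ↦ L(V(u), y^a, y^b; μ) from ℝ^k to ℝ is differentiable at every u, with gradient 2·V(u)·( C_{(i)} − Σ_{j=1}^{m_a} [ y^a_j + μ(a_j − ⟨A_j, V(u)ᵀV(u)⟩) ]·(A_j)_{(i)} − Σ_{j=1}^{m_b} max{ y^b_j + μ(b_j − ⟨B_j, V(u)ᵀV(u)⟩), 0 }·(B_j)_{(i)} ), where M_{(i)} denotes the i-th column of a matrix M. -/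
/-!
Write `W = V(u)`. Since `⟨M, WᵀW⟩ = Σ_{l,p,x} W_{lp} M_{px} W_{lx}` and only the `i`-th column
of `W` depends on `u`, the product rule gives `u ↦ ⟨M, V(u)ᵀV(u)⟩` the gradient
`W (M_{(i)} + (Mᵀ)_{(i)}) = 2 W M_{(i)}` for symmetric `M`. The augmented Lagrangian is
`⟨C, WᵀW⟩` plus scalar functions of these quadratic forms: `t ↦ y (a - t) + (μ/2)(a - t)²`
for each equality constraint and `t ↦ (1/(2μ)) max(y + μ(b - t), 0)²` for each inequality
constraint, the latter differentiable because `t ↦ max(t, 0)²` is `C¹` with derivative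
`2 max(t, 0)`. Their derivatives are `-(y + μ(a - t))` and `-max(y + μ(b - t), 0)`, and the
chain rule assembles the gradient.
-/

open Matrix

/-- The trace (Frobenius) inner product `⟨M, N⟩ = trace (Nᵀ M)` on `k × n` real matrices. -/
noncomputable def tip {k n : ℕ} (M N : Matrix (Fin k) (Fin n) ℝ) : ℝ :=
  (Nᵀ * M).trace

/-- The continuous linear functional `w ↦ ⟨g, w⟩ = Σ_l g_l w_l` on `ℝ^k`. -/
noncomputable def euclidDual {k : ℕ} (g : Fin k → ℝ) : (Fin k → ℝ) →L[ℝ] ℝ :=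
  LinearMap.toContinuousLinearMap
    { toFun := fun w => ∑ l, g l * w l
      map_add' := fun x y => by simp [mul_add, Finset.sum_add_distrib]
      map_smul' := fun c x => by
        simp [Finset.mul_sum, mul_comm, mul_left_comm] }

theorem hasDerivAt_max_zero_sq (x : ℝ) :
    HasDerivAt (fun t : ℝ => max t 0 ^ 2) (2 * max x 0) x := by
  rcases lt_trichotomy x 0 with hx | rfl | hx
  · rw [max_eq_right hx.le, mul_zero]
    refine (hasDerivAt_const x (0 : ℝ)).congr_of_eventuallyEq ?_
    filter_upwards [eventually_lt_nhds hx] with t ht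
    simp [max_eq_right ht.le]
  · have hleft : HasDerivWithinAt (fun t : ℝ => max t 0 ^ 2) 0 (Set.Iic 0) 0 :=
      (hasDerivWithinAt_const _ _ 0).congr
        (fun t ht => by simp [max_eq_right (Set.mem_Iic.mp ht)]) (by simp)
    have hright : HasDerivWithinAt (fun t : ℝ => max t 0 ^ 2) 0 (Set.Ici 0) 0 := by
      refine ((hasDerivAt_pow 2 (0 : ℝ)).hasDerivWithinAt.congr (fun t ht => ?_)
        (by simp)).congr_deriv (by simp)
      simp [max_eq_left (Set.mem_Ici.mp ht)]
    simpa [Set.Iic_union_Ici] using hleft.union hright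
  · rw [max_eq_left hx.le]
    refine (hasDerivAt_pow 2 x).congr_of_eventuallyEq ?_ |>.congr_deriv (by ring)
    filter_upwards [eventually_gt_nhds hx] with t ht
    simp [max_eq_left ht.le]

theorem hasDerivAt_eq_penalty (y a μ t : ℝ) :
    HasDerivAt (fun s => y * (a - s) + μ / 2 * (a - s) ^ 2) (-(y + μ * (a - t))) t := by
  have h := (hasDerivAt_id' t).const_sub a
  exact ((h.const_mul y).add ((h.pow 2).const_mul (μ / 2))).congr_deriv (by ring)

theorem hasDerivAt_ineq_penalty {μ : ℝ} (hμ : μ ≠ 0) (y b t : ℝ) :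
    HasDerivAt (fun s => 1 / (2 * μ) * max (y + μ * (b - s)) 0 ^ 2)
      (-max (y + μ * (b - t)) 0) t := by
  have h := (((hasDerivAt_id' t).const_sub b).const_mul μ).const_add y
  exact (((hasDerivAt_max_zero_sq _).comp t h).const_mul (1 / (2 * μ))).congr_deriv
    (by field_simp)

section euclidDual

variable {k : ℕ}

theorem euclidDual_apply (g w : Fin k → ℝ) : euclidDual g w = ∑ l, g l * w l := rfl

theorem euclidDual_add (g h : Fin k → ℝ) :
    euclidDual (g + h) = euclidDual g + euclidDual h := by
  ext w
  simp [euclidDual_apply, add_mul, Finset.sum_add_distrib]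

theorem euclidDual_smul (c : ℝ) (g : Fin k → ℝ) :
    euclidDual (c • g) = c • euclidDual g := by
  ext w
  simp [euclidDual_apply, Finset.mul_sum, mul_assoc]

noncomputable def euclidDualₗ : (Fin k → ℝ) →ₗ[ℝ] (Fin k → ℝ) →L[ℝ] ℝ where
  toFun := euclidDual
  map_add' := euclidDual_add
  map_smul' := euclidDual_smul

theorem HasFDerivAt.fun_sum_euclidDual {ι : Type*} {s : Finset ι} {f : ι → (Fin k → ℝ) → ℝ}
    {g : ι → Fin k → ℝ} {u : Fin k → ℝ} (h : ∀ j ∈ s, HasFDerivAt (f j) (euclidDual (g j)) u) :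
    HasFDerivAt (fun v => ∑ j ∈ s, f j v) (euclidDual (∑ j ∈ s, g j)) u := by
  rw [show euclidDual (∑ j ∈ s, g j) = ∑ j ∈ s, euclidDual (g j) from map_sum euclidDualₗ g s]
  exact HasFDerivAt.fun_sum h

theorem HasDerivAt.comp_hasFDerivAt_euclidDual {φ : ℝ → ℝ} {φ' : ℝ} {f : (Fin k → ℝ) → ℝ}
    {g : Fin k → ℝ} {u : Fin k → ℝ} (hφ : HasDerivAt φ φ' (f u))
    (hf : HasFDerivAt f (euclidDual g) u) :
    HasFDerivAt (fun v => φ (f v)) (euclidDual (φ' • g)) u := by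
  rw [euclidDual_smul]
  exact hφ.comp_hasFDerivAt u hf

end euclidDual

section QuadraticForm

variable {k n : ℕ}

theorem tip_transpose_mul_self (M : Matrix (Fin n) (Fin n) ℝ) (W : Matrix (Fin k) (Fin n) ℝ) :
    tip M (Wᵀ * W) = ∑ x, ∑ p, ∑ l, W l x * W l p * M p x := by
  simp only [tip, transpose_mul, transpose_transpose, Matrix.trace, Matrix.diag, Matrix.mul_apply,
    Matrix.transpose_apply, Finset.sum_mul]

theorem hasFDerivAt_updateCol_apply (V : Matrix (Fin k) (Fin n) ℝ) (i : Fin n) (u : Fin k → ℝ)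
    (l : Fin k) (p : Fin n) :
    HasFDerivAt (fun v => V.updateCol i v l p)
      (if p = i then ContinuousLinearMap.proj l else (0 : (Fin k → ℝ) →L[ℝ] ℝ)) u := by
  by_cases hp : p = i
  · subst hp
    simpa using hasFDerivAt_apply l u
  · simpa [hp] using hasFDerivAt_const (V l p) u

theorem hasFDerivAt_tip_updateCol {M : Matrix (Fin n) (Fin n) ℝ} (hM : M.IsSymm)
    (V : Matrix (Fin k) (Fin n) ℝ) (i : Fin n) (u : Fin k → ℝ) :
    HasFDerivAt (fun v => tip M ((V.updateCol i v)ᵀ * V.updateCol i v))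
      (euclidDual ((2 : ℝ) • (V.updateCol i u *ᵥ fun l => M l i))) u := by
  simp only [tip_transpose_mul_self]
  have h := HasFDerivAt.fun_sum fun x (_ : x ∈ Finset.univ) =>
    HasFDerivAt.fun_sum fun p (_ : p ∈ Finset.univ) =>
      HasFDerivAt.fun_sum fun l (_ : l ∈ Finset.univ) =>
        ((hasFDerivAt_updateCol_apply V i u l x).mul
          (hasFDerivAt_updateCol_apply V i u l p)).mul_const (M p x)
  refine h.congr_fderiv ?_
  ext w
  simp only [_root_.sum_apply, _root_.add_apply, apply_ite (fun φ : (Fin k → ℝ) →L[ℝ] ℝ => φ w),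
    _root_.smul_apply, ContinuousLinearMap.proj_apply, _root_.zero_apply, smul_eq_mul, mul_add,
    mul_ite, mul_zero, Finset.sum_ite_irrel, Finset.sum_const_zero, Finset.sum_ite_eq',
    Finset.mem_univ, if_true, Finset.sum_add_distrib, euclidDual_apply, Matrix.mulVec, dotProduct,
    Pi.smul_apply]
  simp only [← Finset.sum_add_distrib, Finset.mul_sum, Finset.sum_mul]
  rw [Finset.sum_comm]
  exact Finset.sum_congr rfl fun l _ => Finset.sum_congr rfl fun x _ => by
    rw [hM.apply i x]
    ring

end QuadraticForm

/-- with all columns of `V` fixed except the `i`-th one, the map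
`u ↦ L(V(u), yᵃ, yᵇ; μ)` (where `V(u)` is `V` with its `i`-th column replaced by `u`)
is differentiable at every `u ∈ ℝ^k`, with gradient
`2·V(u)·(C_{(i)} − Σⱼ [yᵃⱼ + μ(aⱼ − ⟨Aⱼ, V(u)ᵀV(u)⟩)]·(Aⱼ)_{(i)}
  − Σⱼ max{yᵇⱼ + μ(bⱼ − ⟨Bⱼ, V(u)ᵀV(u)⟩), 0}·(Bⱼ)_{(i)})`. -/
theorem stmt3 {k n ma mb : ℕ}
    (C : Matrix (Fin n) (Fin n) ℝ) (hC : C.IsSymm)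
    (A : Fin ma → Matrix (Fin n) (Fin n) ℝ) (hA : ∀ j, (A j).IsSymm)
    (B : Fin mb → Matrix (Fin n) (Fin n) ℝ) (hB : ∀ j, (B j).IsSymm)
    (a : Fin ma → ℝ) (b : Fin mb → ℝ)
    (μ : ℝ) (hμ : 0 < μ) (ya : Fin ma → ℝ) (yb : Fin mb → ℝ)
    (V : Matrix (Fin k) (Fin n) ℝ) (i : Fin n) (u : Fin k → ℝ) :
    HasFDerivAt
      (fun u : Fin k → ℝ =>
        tip C ((V.updateCol i u)ᵀ * V.updateCol i u)
          + ∑ j, ya j * (a j - tip (A j) ((V.updateCol i u)ᵀ * V.updateCol i u))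
          + (μ / 2) * ∑ j, (a j - tip (A j) ((V.updateCol i u)ᵀ * V.updateCol i u)) ^ 2
          + (1 / (2 * μ)) * ∑ j,
              (max (yb j + μ * (b j - tip (B j) ((V.updateCol i u)ᵀ * V.updateCol i u))) 0) ^ 2
          - (1 / (2 * μ)) * ∑ j, (yb j) ^ 2)
      (euclidDual ((2 : ℝ) • ((V.updateCol i u) *ᵥ (fun l : Fin n =>
          C l i
            - ∑ j, (ya j + μ * (a j - tip (A j) ((V.updateCol i u)ᵀ * V.updateCol i u))) * A j l i
            - ∑ j, max (yb j + μ * (b j - tip (B j) ((V.updateCol i u)ᵀ * V.updateCol i u))) 0 * B j l i))))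
      u := by
  set W := V.updateCol i u
  have hL := (((hasFDerivAt_tip_updateCol hC V i u).add
      (HasFDerivAt.fun_sum_euclidDual fun j (_ : j ∈ Finset.univ) =>
        (hasDerivAt_eq_penalty (ya j) (a j) μ _).comp_hasFDerivAt_euclidDual
          (hasFDerivAt_tip_updateCol (hA j) V i u))).add
      (HasFDerivAt.fun_sum_euclidDual fun j (_ : j ∈ Finset.univ) =>
        (hasDerivAt_ineq_penalty hμ.ne' (yb j) (b j) _).comp_hasFDerivAt_euclidDual
          (hasFDerivAt_tip_updateCol (hB j) V i u))).sub_const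
    ((1 / (2 * μ)) * ∑ j, (yb j) ^ 2)
  rw [← euclidDual_add, ← euclidDual_add] at hL
  refine (hL.congr_of_eventuallyEq (.of_forall fun v => ?_)).congr_fderiv
    (congrArg euclidDual ?_)
  · simp only [Pi.add_apply, Finset.mul_sum, Finset.sum_add_distrib]
    ring
  · have hcol : (fun l => C l i
          - ∑ j, (ya j + μ * (a j - tip (A j) (Wᵀ * W))) * A j l i
          - ∑ j, max (yb j + μ * (b j - tip (B j) (Wᵀ * W))) 0 * B j l i)
        = (fun l => C l i)
          - ∑ j, (ya j + μ * (a j - tip (A j) (Wᵀ * W))) • (fun l => A j l i)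
          - ∑ j, max (yb j + μ * (b j - tip (B j) (Wᵀ * W))) 0 • (fun l => B j l i) := by
      ext l
      simp [Finset.sum_apply]
    rw [hcol, mulVec_sub, mulVec_sub, mulVec_sum, mulVec_sum]
    simp only [mulVec_smul, smul_sub, Finset.smul_sum, neg_smul, Finset.sum_neg_distrib,
      smul_comm (2 : ℝ)]
    abel
end

section
/- For every μ > 0 and every t ≥ 0, set y = (2 + t, −2 − t). Then: (i) v₁ = 0 is a strict local maximizer of the function v₁ ↦ L(v₁, √(3/2), y; μ), i.e. there exists δ > 0 such that L(v₁, √(3/2), y; μ) < L(0, √(3/2), y; μ) for all v₁ with 0 < |v₁| < δ; and (ii) v₂ = √(3/2) is a global minimizer over ℝ of the function v₂ ↦ L(0, v₂, y; μ). In particular, a block coordinate update of either v₁ or v₂ starting from (v₁, v₂) = (0, √(3/2)) leaves the point unchanged, for every such y and every μ > 0. -/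
/-!
Put `s = v₁²`. Changing `v₁` alone changes `L` by `s (1 - y₁ - μ (2 - v₂²) + (μ/2) s)`, which at
`v₂² = 3/2` and `y₁ = 2 + t` equals `-s ((1 + t) + (μ/2)(1 - s))`, negative for `0 < s < 1`.
At `v₁ = 0` and `y₂ = -y₁` the multiplier terms cancel up to a constant, and completing the square
in `v₂²` gives `L(0, v₂) = y₁ + μ/4 + μ (v₂² - 3/2)²`, minimal exactly where `v₂² = 3/2`.
-/

/-- The augmented Lagrangian of the two-block SDP of Section 5.5:
`L(v₁, v₂, y; μ) = v₁² + y₁(2 − v₁² − v₂²) + y₂(1 − v₂²)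
  + (μ/2)(2 − v₁² − v₂²)² + (μ/2)(1 − v₂²)²`. -/
noncomputable def augLag55 (v₁ v₂ y₁ y₂ μ : ℝ) : ℝ :=
  v₁ ^ 2 + y₁ * (2 - v₁ ^ 2 - v₂ ^ 2) + y₂ * (1 - v₂ ^ 2)
    + (μ / 2) * (2 - v₁ ^ 2 - v₂ ^ 2) ^ 2 + (μ / 2) * (1 - v₂ ^ 2) ^ 2

lemma augLag55_sub_augLag55_zero_left (v₁ v₂ y₁ y₂ μ : ℝ) :
    augLag55 v₁ v₂ y₁ y₂ μ - augLag55 0 v₂ y₁ y₂ μ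
      = v₁ ^ 2 * (1 - y₁ - μ * (2 - v₂ ^ 2) + μ / 2 * v₁ ^ 2) := by
  unfold augLag55
  ring

lemma augLag55_zero_left_neg (v₂ y₁ μ : ℝ) :
    augLag55 0 v₂ y₁ (-y₁) μ = y₁ + μ / 4 + μ * (v₂ ^ 2 - 3 / 2) ^ 2 := by
  unfold augLag55
  ring

lemma augLag55_lt_augLag55_zero_left {v₁ v₂ y₁ μ : ℝ} (y₂ : ℝ) (hv₂ : v₂ ^ 2 = 3 / 2)
    (hy₁ : 1 < y₁) (hμ : 0 ≤ μ) (hv₁ : 0 < v₁ ^ 2) (hv₁' : v₁ ^ 2 < 1) :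
    augLag55 v₁ v₂ y₁ y₂ μ < augLag55 0 v₂ y₁ y₂ μ := by
  have hneg : 1 - y₁ - μ * (2 - v₂ ^ 2) + μ / 2 * v₁ ^ 2 < 0 := by
    rw [hv₂]
    nlinarith
  have := augLag55_sub_augLag55_zero_left v₁ v₂ y₁ y₂ μ
  linarith [mul_neg_of_pos_of_neg hv₁ hneg]

lemma augLag55_zero_sqrt_le (v₂ y₁ : ℝ) {μ : ℝ} (hμ : 0 ≤ μ) :
    augLag55 0 (√(3 / 2)) y₁ (-y₁) μ ≤ augLag55 0 v₂ y₁ (-y₁) μ := by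
  rw [augLag55_zero_left_neg, augLag55_zero_left_neg, Real.sq_sqrt (by norm_num)]
  linarith [mul_nonneg hμ (sq_nonneg (v₂ ^ 2 - 3 / 2))]

/-- for every `μ > 0` and `t ≥ 0`, with `y = (2 + t, −2 − t)`:
(i) `v₁ = 0` is a strict local maximizer of `v₁ ↦ L(v₁, √(3/2), y; μ)`, and
(ii) `v₂ = √(3/2)` is a global minimizer over `ℝ` of `v₂ ↦ L(0, v₂, y; μ)`.
Hence a block coordinate update of either variable leaves `(0, √(3/2))` unchanged. -/
theorem stmt9 (μ t : ℝ) (hμ : 0 < μ) (ht : 0 ≤ t) :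
    (∃ δ > (0 : ℝ), ∀ v₁ : ℝ, 0 < |v₁| → |v₁| < δ →
      augLag55 v₁ (Real.sqrt (3 / 2)) (2 + t) (-2 - t) μ
        < augLag55 0 (Real.sqrt (3 / 2)) (2 + t) (-2 - t) μ) ∧
    (∀ v₂ : ℝ,
      augLag55 0 (Real.sqrt (3 / 2)) (2 + t) (-2 - t) μ
        ≤ augLag55 0 v₂ (2 + t) (-2 - t) μ) := by
  refine ⟨⟨1, one_pos, fun v₁ hpos hlt => ?_⟩, fun v₂ => ?_⟩
  · have hsq_pos : 0 < v₁ ^ 2 := by rw [← sq_abs]; positivity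
    have hsq_lt : v₁ ^ 2 < 1 := by rw [← sq_abs]; nlinarith
    exact augLag55_lt_augLag55_zero_left _ (Real.sq_sqrt (by norm_num)) (by linarith) hμ.le
      hsq_pos hsq_lt
  · rw [show (-2 - t : ℝ) = -(2 + t) by ring]
    exact augLag55_zero_sqrt_le v₂ (2 + t) hμ.le
end
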